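/- arXiv:math/0205311 — 4 statements merged into one kernel-verified Lean document; each statement's English description precedes it below -/
import Mathlib

section
/- If the zero ideal is the unique maximal homogeneous ideal of a nontrivial G-graded commutative ring R (equivalently, every proper homogeneous ideal of R is the zero ideal), then every finitely generated G-graded module over R is a free R-module. -/
/-!
A nonzero homogeneous element `r` of `R` is a unit: `(r)` is a nonzero homogeneous ideal, so it is
not proper. Now take a finite generating set of `M` made of homogeneous elements and minimal for
inclusion. A nontrivial relation `∑ cᵢ vᵢ = 0` among its elements with `cⱼ ≠ 0` has, in the
degree `k + deg vⱼ` for a degree `k` where `cⱼ` has a nonzero component, a homogeneous component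
`∑ (cᵢ)_{k + deg vⱼ - deg vᵢ} vᵢ = 0` whose coefficients are homogeneous and whose `j`-th
coefficient is nonzero, hence a unit. Then `vⱼ` lies in the span of the other generators,
contradicting minimality; so the generating set is a basis.
-/

open DirectSum SetLike Submodule

theorem isUnit_of_isHomogeneousElem {ι R σ : Type*} [DecidableEq ι] [AddMonoid ι] [CommSemiring R]
    [SetLike σ R] [AddSubmonoidClass σ R] (𝒜 : ι → σ) [GradedRing 𝒜]
    (hzero : ∀ I : Ideal R, I.IsHomogeneous 𝒜 → I ≠ ⊤ → I = ⊥)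
    {r : R} (hr : r ≠ 0) (hhom : IsHomogeneousElem 𝒜 r) : IsUnit r := by
  by_contra hu
  refine hr (Ideal.span_singleton_eq_bot.1 (hzero _ ?_ (mt Ideal.span_singleton_eq_top.1 hu)))
  exact Ideal.homogeneous_span 𝒜 {r} (by simpa using hhom)

theorem mem_span_image_erase_of_isUnit {ι R M : Type*} [DecidableEq ι] [Ring R] [AddCommGroup M]
    [Module R M] {s : Finset ι} {v : ι → M} {c : ι → R} (hc : ∑ i ∈ s, c i • v i = 0)
    {j : ι} (hj : j ∈ s) (hu : IsUnit (c j)) : v j ∈ span R (v '' ↑(s.erase j)) := by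
  obtain ⟨u, hu⟩ := hu
  have hcj : c j • v j = -∑ i ∈ s.erase j, c i • v i :=
    eq_neg_of_add_eq_zero_left (by rwa [Finset.add_sum_erase s (fun i ↦ c i • v i) hj])
  rw [← hu, ← Units.smul_def, ← eq_inv_smul_iff] at hcj
  rw [hcj, Units.smul_def]
  exact smul_mem _ _ (neg_mem (sum_mem fun i hi ↦ smul_mem _ _ (subset_span ⟨i, hi, rfl⟩)))

section Decomposition

variable {ι R M σ : Type*} [DecidableEq ι] [Semiring R] [AddCommMonoid M] [Module R M]
  [SetLike σ M] [AddSubmonoidClass σ M] (ℳ : ι → σ) [Decomposition ℳ]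

theorem span_setOf_isHomogeneousElem : span R {x : M | IsHomogeneousElem ℳ x} = ⊤ :=
  eq_top_iff.2 fun x _ ↦ Decomposition.inductionOn ℳ (zero_mem _)
    (fun m ↦ subset_span ⟨_, m.2⟩) (fun _ _ ↦ add_mem) x

theorem exists_finset_isHomogeneousElem_span_eq_top [Module.Finite R M] :
    ∃ s : Finset M, (∀ x ∈ s, IsHomogeneousElem ℳ x) ∧ span R (s : Set M) = ⊤ := by
  have hfg : (span R {x : M | IsHomogeneousElem ℳ x}).FG :=
    (span_setOf_isHomogeneousElem (R := R) ℳ).symm ▸ Module.Finite.fg_top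
  obtain ⟨s, hs, hspan⟩ := (fg_span_iff_fg_span_finset_subset _).1 hfg
  exact ⟨s, hs, hspan ▸ span_setOf_isHomogeneousElem ℳ⟩

end Decomposition

section GradedModule

variable {G R M σ τ : Type*} [AddGroup G] [DecidableEq G] [Semiring R] [AddCommMonoid M]
  [Module R M] [SetLike σ R] [AddSubmonoidClass σ R] (𝒜 : G → σ) [GradedRing 𝒜]
  [SetLike τ M] [AddSubmonoidClass τ M] (ℳ : G → τ) [Decomposition ℳ] [GradedSMul 𝒜 ℳ]

theorem coe_decompose_smul_of_mem {g : G} {m : M} (hm : m ∈ ℳ g) (r : R) (n : G) :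
    (decompose ℳ (r • m) n : M) = (decompose 𝒜 r (n - g) : R) • m := by
  induction r using Decomposition.inductionOn 𝒜 with
  | zero => simp
  | @homogeneous i r =>
    obtain ⟨r, hr⟩ := r
    have hrm : r • m ∈ ℳ (i + g) := GradedSMul.smul_mem hr hm
    by_cases hi : i = n - g
    · subst hi
      rw [sub_add_cancel] at hrm
      simp [decompose_of_mem_same ℳ hrm, decompose_of_mem_same 𝒜 hr]
    · have hig : i + g ≠ n := fun h ↦ hi (eq_sub_of_add_eq h)
      simp [decompose_of_mem_ne ℳ hrm hig, decompose_of_mem_ne 𝒜 hr hi]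
  | add r r' hr hr' => simp [add_smul, hr, hr']

theorem exists_isHomogeneousElem_relation {ι : Type*} {s : Finset ι} {v : ι → M}
    (hv : ∀ i ∈ s, IsHomogeneousElem ℳ (v i)) {c : ι → R} (hc : ∑ i ∈ s, c i • v i = 0)
    {j : ι} (hj : c j ≠ 0) :
    ∃ d : ι → R, (∀ i, IsHomogeneousElem 𝒜 (d i)) ∧ ∑ i ∈ s, d i • v i = 0 ∧ d j ≠ 0 := by
  classical
  choose! deg hdeg using hv
  obtain ⟨k, hk⟩ : ∃ k, (decompose 𝒜 (c j) k : R) ≠ 0 := by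
    by_contra! h
    exact hj (by rw [← sum_support_decompose 𝒜 (c j)]; exact Finset.sum_eq_zero fun k _ ↦ h k)
  refine ⟨fun i ↦ decompose 𝒜 (c i) (k + deg j - deg i), fun i ↦ ⟨_, coe_mem _⟩, ?_,
    by convert hk <;> simp⟩
  calc ∑ i ∈ s, (decompose 𝒜 (c i) (k + deg j - deg i) : R) • v i
      = ∑ i ∈ s, (decompose ℳ (c i • v i) (k + deg j) : M) :=
        Finset.sum_congr rfl fun i hi ↦ (coe_decompose_smul_of_mem 𝒜 ℳ (hdeg i hi) _ _).symm
    _ = decompose ℳ (∑ i ∈ s, c i • v i) (k + deg j) := by simp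
    _ = 0 := by simp [hc]

end GradedModule

section GradedModuleOverRing

variable {G R M σ τ : Type*} [AddGroup G] [DecidableEq G] [Ring R] [AddCommGroup M]
  [Module R M] [SetLike σ R] [AddSubmonoidClass σ R] (𝒜 : G → σ) [GradedRing 𝒜]
  [SetLike τ M] [AddSubmonoidClass τ M] (ℳ : G → τ) [Decomposition ℳ] [GradedSMul 𝒜 ℳ]

theorem linearIndepOn_of_notMem_span_erase
    (hunit : ∀ r : R, r ≠ 0 → IsHomogeneousElem 𝒜 r → IsUnit r) [DecidableEq M] {s : Finset M}
    (hs : ∀ x ∈ s, IsHomogeneousElem ℳ x) (hmin : ∀ x ∈ s, x ∉ span R (s.erase x : Set M)) :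
    LinearIndepOn R id (s : Set M) := by
  refine linearIndepOn_iff'.2 fun t c hts hc x hx ↦ by_contra fun hcx ↦ ?_
  obtain ⟨d, hd, hrel, hdx⟩ :=
    exists_isHomogeneousElem_relation 𝒜 ℳ (v := id) (fun y hy ↦ hs y (hts hy)) hc hcx
  have hxt := mem_span_image_erase_of_isUnit hrel hx (hunit _ hdx (hd x))
  rw [Set.image_id] at hxt
  have hts' : t.erase x ⊆ s.erase x := Finset.erase_subset_erase x (Finset.coe_subset.1 hts)
  exact hmin x (hts hx) (span_mono (Finset.coe_subset.2 hts') hxt)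

theorem free_of_isHomogeneousElem_span_eq_top
    (hunit : ∀ r : R, r ≠ 0 → IsHomogeneousElem 𝒜 r → IsUnit r) [DecidableEq M] (s : Finset M)
    (hs : ∀ x ∈ s, IsHomogeneousElem ℳ x) (hspan : span R (s : Set M) = ⊤) :
    Module.Free R M := by
  induction s using Finset.strongInduction with
  | H s ih =>
  by_cases hmin : ∀ x ∈ s, x ∉ span R (s.erase x : Set M)
  · have hli := linearIndepOn_of_notMem_span_erase 𝒜 ℳ hunit hs hmin
    exact .of_basis (Module.Basis.mk hli.linearIndependent (by simp [hspan]))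
  obtain ⟨x, hx, hxs⟩ : ∃ x ∈ s, x ∈ span R (s.erase x : Set M) := by simpa using hmin
  refine ih _ (Finset.erase_ssubset hx) (fun y hy ↦ hs y (Finset.mem_of_mem_erase hy)) ?_
  rwa [← span_insert_eq_span hxs, ← Finset.coe_insert, Finset.insert_erase hx]

end GradedModuleOverRing

theorem free_of_zero_unique_maximal_homogeneous_general {G R M : Type*} [AddCommGroup G]
    [DecidableEq G] [CommRing R]
    (𝒜 : G → AddSubgroup R) [GradedRing 𝒜]
    (hzero : ∀ I : Ideal R, Ideal.IsHomogeneous 𝒜 I → I ≠ ⊤ → I = ⊥)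
    [AddCommGroup M] [Module R M] (ℳ : G → AddSubgroup M)
    [DirectSum.Decomposition ℳ] [SetLike.GradedSMul 𝒜 ℳ]
    [Module.Finite R M] :
    Module.Free R M := by
  classical
  obtain ⟨s, hs, hspan⟩ := exists_finset_isHomogeneousElem_span_eq_top (R := R) ℳ
  exact free_of_isHomogeneousElem_span_eq_top 𝒜 ℳ
    (fun _ hr ↦ isUnit_of_isHomogeneousElem 𝒜 hzero hr) s hs hspan

/-- If the zero ideal is the unique maximal homogeneous ideal of a nontrivial `G`-graded
commutative ring `R` (equivalently, every proper homogeneous ideal of `R` is zero), then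
every finitely generated `G`-graded module over `R` is a free `R`-module. -/
theorem free_of_zero_unique_maximal_homogeneous {G R M : Type*} [AddCommGroup G]
    [DecidableEq G] [CommRing R] [Nontrivial R]
    (𝒜 : G → AddSubgroup R) [GradedRing 𝒜]
    (hzero : ∀ I : Ideal R, Ideal.IsHomogeneous 𝒜 I → I ≠ ⊤ → I = ⊥)
    [AddCommGroup M] [Module R M] (ℳ : G → AddSubgroup M)
    [DirectSum.Decomposition ℳ] [SetLike.GradedSMul 𝒜 ℳ]
    [Module.Finite R M] :
    Module.Free R M :=
  free_of_zero_unique_maximal_homogeneous_general 𝒜 hzero ℳ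
end

section
/- Graded Nakayama's lemma: Let R be a commutative G-graded ring, let M be a finitely generated G-graded R-module, and let 𝔞 be a homogeneous ideal of R contained in the homogeneous Jacobson radical of R (the intersection of all maximal homogeneous ideals). If 𝔞M = M, then M = 0. -/
/-!
The determinant trick gives `r ∈ R` with `r - 1 ∈ 𝔞` and `r • M = 0`. The annihilator of a
graded module is homogeneous, so the degree-zero component `r₀` of `r` also kills `M`, and
`r₀ - 1 ∈ 𝔞` because `𝔞` is homogeneous. A homogeneous element outside every maximal homogeneous
ideal is a unit (its principal ideal is homogeneous, and proper homogeneous ideals lie in maximal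
ones by Zorn), and `r₀` lies in none of them since each contains `r₀ - 1`. So a unit kills `M`.
-/

open DirectSum SetLike

theorem DirectSum.coe_decompose_smul_add_of_right_mem {ι R M σ τ : Type*}
    [DecidableEq ι] [AddRightCancelMonoid ι] [Semiring R] [SetLike σ R] [AddSubmonoidClass σ R]
    (𝒜 : ι → σ) [GradedRing 𝒜] [AddCommMonoid M] [Module R M] [SetLike τ M]
    [AddSubmonoidClass τ M] (ℳ : ι → τ) [Decomposition ℳ] [GradedSMul 𝒜 ℳ]
    (a : R) {m : M} {i j : ι} (hm : m ∈ ℳ j) :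
    (decompose ℳ (a • m) (i + j) : M) = (decompose 𝒜 a i : R) • m := by
  induction a using Decomposition.inductionOn 𝒜 with
  | zero => simp
  | add a b ha hb => simp [add_smul, ha, hb]
  | @homogeneous k a =>
    have ham : (a : R) • m ∈ ℳ (k + j) := GradedSMul.smul_mem a.2 hm
    by_cases hki : k = i
    · subst hki
      rw [decompose_of_mem_same ℳ ham, decompose_coe, of_eq_same]
    · rw [decompose_of_mem_ne ℳ ham (fun h => hki (add_right_cancel h)), decompose_coe,
        of_eq_of_ne _ _ _ (Ne.symm hki), ZeroMemClass.coe_zero, zero_smul]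

theorem Module.annihilator_isHomogeneous {ι R M σ τ : Type*}
    [DecidableEq ι] [AddRightCancelMonoid ι] [CommSemiring R] [SetLike σ R] [AddSubmonoidClass σ R]
    (𝒜 : ι → σ) [GradedRing 𝒜] [AddCommMonoid M] [Module R M] [SetLike τ M]
    [AddSubmonoidClass τ M] (ℳ : ι → τ) [Decomposition ℳ] [GradedSMul 𝒜 ℳ] :
    (Module.annihilator R M).IsHomogeneous 𝒜 := by
  classical
  intro i r hr
  rw [Module.mem_annihilator] at hr ⊢
  intro m
  rw [← sum_support_decompose ℳ m, Finset.smul_sum]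
  refine Finset.sum_eq_zero fun j _ => ?_
  rw [← coe_decompose_smul_add_of_right_mem 𝒜 ℳ r (decompose ℳ m j).2, hr]
  simp

namespace HomogeneousIdeal

variable {ι R σ : Type*} [DecidableEq ι] [AddMonoid ι] [SetLike σ R] (𝒜 : ι → σ)

theorem isCompactElement_top [Semiring R] [AddSubmonoidClass σ R] [GradedRing 𝒜] :
    IsCompactElement (⊤ : HomogeneousIdeal 𝒜) := by
  rw [CompleteLattice.isCompactElement_iff_le_of_directed_sSup_le]
  intro s hne hdir htop
  have hone : (1 : R) ∈ (sSup s).toIdeal := (top_le_iff.mp htop).symm ▸ Submodule.mem_top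
  rw [toIdeal_sSup, ← sSup_image, Submodule.mem_sSup_of_directed (hne.image _)
    (hdir.mono_comp fun _ _ h => h)] at hone
  obtain ⟨_, ⟨I, hI, rfl⟩, hIone⟩ := hone
  exact ⟨I, hI, top_le_iff.mpr (toIdeal_injective (Ideal.eq_top_of_isUnit_mem _ hIone isUnit_one))⟩

instance [Semiring R] [AddSubmonoidClass σ R] [GradedRing 𝒜] :
    IsCoatomic (HomogeneousIdeal 𝒜) :=
  CompleteLattice.coatomic_of_top_compact (isCompactElement_top 𝒜)

theorem isUnit_of_forall_isCoatom_notMem [CommSemiring R] [AddSubmonoidClass σ R] [GradedRing 𝒜]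
    {x : R} (hx : IsHomogeneousElem 𝒜 x) (hmax : ∀ K : HomogeneousIdeal 𝒜, IsCoatom K → x ∉ K) :
    IsUnit x := by
  rw [← Ideal.span_singleton_eq_top]
  let I : HomogeneousIdeal 𝒜 :=
    ⟨Ideal.span {x}, Ideal.homogeneous_span 𝒜 _ (by simpa using hx)⟩
  obtain hI | ⟨K, hK, hIK⟩ := eq_top_or_exists_le_coatom I
  · exact congrArg toIdeal hI
  · exact (hmax K hK (hIK (Ideal.subset_span rfl))).elim

end HomogeneousIdeal

/-- **Graded Nakayama's lemma.** Let `R` be a commutative `G`-graded ring, `M` a finitely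
generated `G`-graded `R`-module, and `𝔞` a homogeneous ideal of `R` contained in the
homogeneous Jacobson radical of `R` (i.e. contained in every maximal homogeneous ideal).
If `𝔞 • M = M`, then `M = 0`. -/
theorem graded_nakayama {G R M : Type*} [AddCommGroup G] [DecidableEq G] [CommRing R]
    (𝒜 : G → AddSubgroup R) [GradedRing 𝒜]
    [AddCommGroup M] [Module R M] (ℳ : G → AddSubgroup M)
    [DirectSum.Decomposition ℳ] [SetLike.GradedSMul 𝒜 ℳ]
    [Module.Finite R M]
    (𝔞 : Ideal R) (h𝔞 : Ideal.IsHomogeneous 𝒜 𝔞)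
    (hrad : ∀ J : Ideal R, Ideal.IsHomogeneous 𝒜 J → J ≠ ⊤ →
      (∀ K : Ideal R, Ideal.IsHomogeneous 𝒜 K → K ≠ ⊤ → J ≤ K → K = J) → 𝔞 ≤ J)
    (hM : 𝔞 • (⊤ : Submodule R M) = ⊤) :
    Subsingleton M := by
  have hmax : ∀ K : HomogeneousIdeal 𝒜, IsCoatom K → 𝔞 ≤ K.toIdeal := fun K hK =>
    hrad K.toIdeal K.isHomogeneous (fun h => hK.1 (HomogeneousIdeal.toIdeal_injective h))
      fun J hJ hJtop hKJ => by
        obtain h | h := hK.le_iff.mp (show K ≤ ⟨J, hJ⟩ from hKJ)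
        · exact (hJtop (congrArg HomogeneousIdeal.toIdeal h)).elim
        · exact congrArg HomogeneousIdeal.toIdeal h
  obtain ⟨r, hr1, hr⟩ := Submodule.exists_sub_one_mem_and_smul_eq_zero_of_fg_of_le_smul 𝔞 ⊤
    Module.Finite.fg_top hM.ge
  set r₀ : R := (decompose 𝒜 r 0 : R)
  have hr₀ann : r₀ ∈ Module.annihilator R M :=
    Module.annihilator_isHomogeneous 𝒜 ℳ 0 (Module.mem_annihilator.mpr fun m => hr m trivial)
  have hr₀1 : r₀ - 1 ∈ 𝔞 := by
    have h := h𝔞 0 hr1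
    rwa [decompose_sub, DirectSum.sub_apply, AddSubgroup.coe_sub,
      decompose_of_mem_same 𝒜 (SetLike.one_mem_graded 𝒜)] at h
  have hr₀unit : IsUnit r₀ :=
    HomogeneousIdeal.isUnit_of_forall_isCoatom_notMem 𝒜 ⟨0, (decompose 𝒜 r 0).2⟩ fun K hK hr₀K =>
      hK.1 (HomogeneousIdeal.toIdeal_injective (K.toIdeal.eq_top_of_isUnit_mem
        (by simpa using K.toIdeal.sub_mem hr₀K (hmax K hK hr₀1)) isUnit_one))
  exact Module.annihilator_eq_top_iff.mp (Ideal.eq_top_of_isUnit_mem _ hr₀ann hr₀unit)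
end

section
/- Let k be a field, n ≥ 2, and let A be an n × (n−2) matrix over k whose associated linear map k^{n−2} → k^n is injective, with image W ⊆ k^n. For two distinct indices φ, ψ ∈ {1, …, n}, the images of the standard basis vectors e_φ and e_ψ in the quotient vector space k^n / W are linearly independent if and only if the determinant of the (n−2) × (n−2) submatrix of A obtained by deleting the rows indexed by φ and ψ is nonzero. -/
open Matrix

/-- Let `k` be a field, `n ≥ 2`, and `A` an `n × (n-2)` matrix over `k` whose associated
linear map `kⁿ⁻² → kⁿ` is injective, with image `W`. For distinct indices `φ ≠ ψ`, the
images of the standard basis vectors `e_φ`, `e_ψ` in `kⁿ / W` are linearly independent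
if and only if the determinant of the `(n-2) × (n-2)` submatrix of `A` obtained by
deleting the rows `φ` and `ψ` (the remaining rows taken in order, encoded by the strictly
monotone map `r` enumerating the complement of `{φ, ψ}`) is nonzero. -/
theorem quotient_basis_independent_iff_minor_ne_zero
    {k : Type*} [Field k] {n : ℕ} (hn : 2 ≤ n)
    (A : Matrix (Fin n) (Fin (n - 2)) k)
    (hinj : Function.Injective A.mulVecLin)
    (φ ψ : Fin n) (hφψ : φ ≠ ψ)
    (r : Fin (n - 2) → Fin n) (hr : StrictMono r)
    (hrange : Set.range r = {i : Fin n | i ≠ φ ∧ i ≠ ψ}) :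
    LinearIndependent k
      ![Submodule.Quotient.mk (p := LinearMap.range A.mulVecLin) (Pi.single φ (1 : k)),
        Submodule.Quotient.mk (p := LinearMap.range A.mulVecLin) (Pi.single ψ (1 : k))] ↔
      (A.submatrix r id).det ≠ 0 := by
  classical
  have hrφ : ∀ i, r i ≠ φ := fun i =>
    ((hrange ▸ Set.mem_range_self i : r i ∈ {i : Fin n | i ≠ φ ∧ i ≠ ψ})).1
  have hrψ : ∀ i, r i ≠ ψ := fun i =>
    ((hrange ▸ Set.mem_range_self i : r i ∈ {i : Fin n | i ≠ φ ∧ i ≠ ψ})).2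
  set W := LinearMap.range A.mulVecLin with hW
  set N : Matrix (Fin (n - 2) ⊕ Fin 2) (Fin (n - 2) ⊕ Fin 2) k :=
    Matrix.fromBlocks (A.submatrix r id) 0 (A.submatrix ![φ, ψ] id) 1 with hN
  have hdet : (A.submatrix r id).det = N.det := by
    rw [hN, Matrix.det_fromBlocks_zero₁₂, Matrix.det_one, mul_one]
  -- key kernel correspondence
  have key : ∀ (u : Fin (n - 2) → k) (s t : k),
      N *ᵥ (Sum.elim u ![s, t]) = 0 ↔
        A *ᵥ u + s • (Pi.single φ 1 : Fin n → k) + t • (Pi.single ψ 1 : Fin n → k) = 0 := by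
    intro u s t
    set v := A *ᵥ u + s • (Pi.single φ 1 : Fin n → k) + t • (Pi.single ψ 1 : Fin n → k) with hv
    have heq : N *ᵥ (Sum.elim u ![s, t]) =
        Sum.elim (fun i => v (r i)) (fun i => v (![φ, ψ] i)) := by
      rw [hN, Matrix.fromBlocks_mulVec]
      have h1 : Sum.elim u ![s, t] ∘ Sum.inl = u := rfl
      have h2 : Sum.elim u ![s, t] ∘ Sum.inr = ![s, t] := rfl
      rw [h1, h2]
      ext x
      cases x with
      | inl i =>
          simp only [Sum.elim_inl, Pi.add_apply, Matrix.zero_mulVec, Pi.zero_apply, add_zero]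
          have : (A.submatrix r id *ᵥ u) i = (A *ᵥ u) (r i) := rfl
          rw [this, hv]
          simp [Pi.single_eq_of_ne (hrφ i), Pi.single_eq_of_ne (hrψ i)]
      | inr i =>
          simp only [Sum.elim_inr, Pi.add_apply, Matrix.one_mulVec]
          have : (A.submatrix ![φ, ψ] id *ᵥ u) i = (A *ᵥ u) (![φ, ψ] i) := rfl
          rw [this, hv]
          fin_cases i <;>
            simp [Pi.single_eq_of_ne hφψ, Pi.single_eq_of_ne (Ne.symm hφψ), hφψ]
    rw [heq]
    constructor
    · intro h
      funext j
      by_cases h1 : j = φ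
      · subst h1; exact congrFun h (Sum.inr 0)
      by_cases h2 : j = ψ
      · subst h2; exact congrFun h (Sum.inr 1)
      · obtain ⟨i, hi⟩ : j ∈ Set.range r := by rw [hrange]; exact ⟨h1, h2⟩
        have := congrFun h (Sum.inl i)
        simpa [hi] using this
    · intro h
      funext x
      cases x with
      | inl i => simp [h]
      | inr i => simp [h]
  have hmk : ∀ s t : k,
      (s • Submodule.Quotient.mk (p := W) ((Pi.single φ 1 : Fin n → k)) +
        t • Submodule.Quotient.mk (p := W) ((Pi.single ψ 1 : Fin n → k)) = 0) ↔
      s • (Pi.single φ 1 : Fin n → k) + t • (Pi.single ψ 1 : Fin n → k) ∈ W := by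
    intro s t
    rw [← Submodule.Quotient.mk_smul, ← Submodule.Quotient.mk_smul,
      ← Submodule.Quotient.mk_add, Submodule.Quotient.mk_eq_zero]
  rw [hdet, Ne, ← Matrix.exists_mulVec_eq_zero_iff, LinearIndependent.pair_iff]
  constructor
  · intro H
    rintro ⟨v, hv0, hv⟩
    set u : Fin (n - 2) → k := v ∘ Sum.inl with hu
    set s : k := v (Sum.inr 0) with hs
    set t : k := v (Sum.inr 1) with ht
    have hveq : v = Sum.elim u ![s, t] := by
      funext x
      cases x with
      | inl i => rfl
      | inr i => fin_cases i <;> rfl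
    rw [hveq] at hv
    have hk := (key u s t).mp hv
    have hmem : s • (Pi.single φ 1 : Fin n → k) + t • (Pi.single ψ 1 : Fin n → k) ∈ W := by
      refine ⟨-u, ?_⟩
      rw [Matrix.mulVecLin_apply, Matrix.mulVec_neg]
      rw [add_assoc] at hk
      exact neg_eq_of_add_eq_zero_right hk
    obtain ⟨hs0, ht0⟩ := H s t ((hmk s t).mpr hmem)
    have hu0 : u = 0 := by
      apply hinj
      rw [map_zero, Matrix.mulVecLin_apply]
      rw [hs0, ht0] at hk
      simpa using hk
    apply hv0
    rw [hveq, hu0, hs0, ht0]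
    funext x
    cases x with
    | inl i => simp
    | inr i => fin_cases i <;> simp
  · intro H s t hst
    obtain ⟨u, hu⟩ := (hmk s t).mp hst
    rw [Matrix.mulVecLin_apply] at hu
    have hz : N *ᵥ (Sum.elim (-u) ![s, t]) = 0 := by
      rw [key]
      rw [Matrix.mulVec_neg, hu]
      abel
    have hv0 : Sum.elim (-u) ![s, t] = 0 := by
      by_contra hne
      exact H ⟨_, hne, hz⟩
    constructor
    · have := congrFun hv0 (Sum.inr 0); simpa using this
    · have := congrFun hv0 (Sum.inr 1); simpa using this
end

section
/- Let k be a field and let E be a finitely generated, torsion-free module over the polynomial ring P = k[x_1, …, x_n] of rank 1 (i.e. the localization of E at the zero ideal, equivalently E ⊗_P Frac(P), is a 1-dimensional Frac(P)-vector space), equipped with a ℤ^n-grading compatible with the fine ℕ^n-grading of P (so that x^a · E_b ⊆ E_{a+b} for all a ∈ ℕ^n, b ∈ ℤ^n). Then E is isomorphic as a P-module to an ideal of P generated by monomials. -/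
/-!
A torsion-free module of rank one embeds into `K = Frac P`. For homogeneous `m` and `e₀ ≠ 0`
there is a relation `p • m = q • e₀` with `p ≠ 0`; taking the component of degree `a + deg m`
for a monomial `xᵃ` of `p` turns it into a monomial relation `μ xᵃ • m = ν xᶜ • e₀`. Multiplying
the embedding by `x^N / T e₀` for `N` large then sends each member of a finite homogeneous
generating set to a nonzero multiple of a monomial, so the image of `E` is a monomial ideal.
-/

open TensorProduct MvPolynomial DirectSum

theorem exists_injective_linearMap_fractionRing {R M : Type*} [CommRing R] [IsDomain R]
    [AddCommGroup M] [Module R M] (htf : ∀ (r : R) (m : M), r • m = 0 → r = 0 ∨ m = 0)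
    (hrank : Module.rank (FractionRing R) (FractionRing R ⊗[R] M) = 1) :
    ∃ T : M →ₗ[R] FractionRing R, Function.Injective T := by
  let f : M →ₗ[R] FractionRing R ⊗[R] M := TensorProduct.mk R (FractionRing R) M 1
  have hloc : IsLocalizedModule (nonZeroDivisors R) f :=
    (isLocalizedModule_iff_isBaseChange _ (FractionRing R) f).mpr
      (TensorProduct.isBaseChange R M (FractionRing R))
  have hf : Function.Injective f := by
    refine (injective_iff_map_eq_zero f).mpr fun m hm => ?_
    obtain ⟨s, hs⟩ := (IsLocalizedModule.eq_zero_iff (nonZeroDivisors R) f).mp hm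
    exact (htf s m hs).resolve_left (nonZeroDivisors.ne_zero s.2)
  obtain ⟨ψ⟩ := nonempty_linearEquiv_of_lift_rank_eq
    (R := FractionRing R) (M := FractionRing R ⊗[R] M) (M' := FractionRing R)
    (by rw [hrank, Module.rank_self]; simp)
  exact ⟨(ψ.restrictScalars R).toLinearMap ∘ₗ f, (ψ.restrictScalars R).injective.comp hf⟩

theorem nontrivial_of_rank_tensor_eq_one {R M : Type*} [CommRing R]
    [AddCommGroup M] [Module R M] {K : Type*} [Field K] [Algebra R K]
    (hrank : Module.rank K (K ⊗[R] M) = 1) : Nontrivial M := by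
  by_contra h
  rw [not_nontrivial_iff_subsingleton] at h
  simp [rank_subsingleton'] at hrank

theorem exists_smul_eq_smul_of_injective {R K M : Type*} [CommRing R] [IsDomain R] [Field K]
    [Algebra R K] [IsFractionRing R K] [AddCommGroup M] [Module R M] {T : M →ₗ[R] K}
    (hT : Function.Injective T) (x : M) {y : M} (hy : y ≠ 0) :
    ∃ p q : R, p ≠ 0 ∧ p • x = q • y := by
  obtain ⟨⟨r, s⟩, hrs⟩ := IsLocalization.surj (nonZeroDivisors R) (T x)
  obtain ⟨⟨r₀, s₀⟩, hrs₀⟩ := IsLocalization.surj (nonZeroDivisors R) (T y)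
  have hTy : T y ≠ 0 := (map_ne_zero_iff T hT).mpr hy
  have hr₀ : r₀ ≠ 0 := by
    rintro rfl
    simp only [map_zero, mul_eq_zero, hTy, false_or] at hrs₀
    exact nonZeroDivisors.ne_zero s₀.2 (IsFractionRing.to_map_eq_zero_iff.mp hrs₀)
  refine ⟨r₀ * s, r * s₀, mul_ne_zero hr₀ (nonZeroDivisors.ne_zero s.2), hT ?_⟩
  simp only [map_smul, Algebra.smul_def, map_mul]
  linear_combination (algebraMap R K r₀) * hrs - (algebraMap R K r) * hrs₀

theorem DirectSum.Decomposition.exists_finset_homogeneous_span_eq_top {ι R M σ : Type*}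
    [DecidableEq ι] [Semiring R] [AddCommMonoid M] [Module R M] [SetLike σ M]
    [AddSubmonoidClass σ M] (ℳ : ι → σ) [Decomposition ℳ] [Module.Finite R M] :
    ∃ H : Finset M, (∀ x ∈ H, x ≠ 0 ∧ ∃ i, x ∈ ℳ i) ∧ Submodule.span R (H : Set M) = ⊤ := by
  classical
  let S : Set M := {x | x ≠ 0 ∧ ∃ i, x ∈ ℳ i}
  have hS : Submodule.span R S = ⊤ := by
    refine Submodule.eq_top_iff'.mpr fun m => ?_
    induction m using Decomposition.inductionOn ℳ with
    | zero => exact zero_mem _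
    | @homogeneous i m =>
      by_cases hm : (m : M) = 0
      · rw [hm]; exact zero_mem _
      · exact Submodule.subset_span ⟨hm, i, m.2⟩
    | add m m' hm hm' => exact add_mem hm hm'
  obtain ⟨G, hG⟩ := Module.Finite.fg_top (R := R) (M := M)
  choose T hTS hT using fun g : M =>
    Submodule.mem_span_finite_of_mem_span (hS ▸ trivial : g ∈ Submodule.span R S)
  refine ⟨G.biUnion T, fun x hx => ?_, eq_top_iff.mpr ?_⟩
  · obtain ⟨g, -, hxg⟩ := Finset.mem_biUnion.mp hx
    exact hTS g hxg
  · rw [← hG, Submodule.span_le]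
    intro g hg
    refine Submodule.span_mono ?_ (hT g)
    simp only [Finset.coe_biUnion]
    exact Set.subset_biUnion_of_mem (u := fun g => (T g : Set M)) hg

section FineGrading

variable {σ R E : Type*} [Fintype σ] [CommSemiring R] [AddCommGroup E]
  [Module (MvPolynomial σ R) E]

variable (R) in
def IsFineGraded (ℰ : (σ → ℤ) → AddSubgroup E) : Prop :=
  ∀ (c : R) (a : σ →₀ ℕ) (b : σ → ℤ) (e : E), e ∈ ℰ b →
    monomial a c • e ∈ ℰ ((fun i => (a i : ℤ)) + b)

variable {ℰ : (σ → ℤ) → AddSubgroup E} [Decomposition ℰ]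

theorem coe_decompose_monomial_smul (hℰ : IsFineGraded R ℰ) {e : E} {b : σ → ℤ} (he : e ∈ ℰ b)
    (a : σ →₀ ℕ) (r : R) (d : σ → ℤ) :
    (decompose ℰ (monomial a r • e) d : E) =
      if (fun i => (a i : ℤ)) + b = d then monomial a r • e else 0 := by
  split_ifs with h
  · exact decompose_of_mem_same ℰ (h ▸ hℰ r a b e he)
  · exact decompose_of_mem_ne ℰ (hℰ r a b e he) h

theorem coe_decompose_smul (hℰ : IsFineGraded R ℰ) {e : E} {b : σ → ℤ} (he : e ∈ ℰ b)
    (p : MvPolynomial σ R) (d : σ → ℤ) :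
    (decompose ℰ (p • e) d : E) = ∑ a ∈ p.support,
      if (fun i => (a i : ℤ)) + b = d then monomial a (p.coeff a) • e else 0 := by
  conv_lhs => rw [p.as_sum, Finset.sum_smul, decompose_sum]
  rw [DFinsupp.finsetSum_apply, AddSubmonoidClass.coe_finsetSum]
  exact Finset.sum_congr rfl fun a _ => coe_decompose_monomial_smul hℰ he a _ d

theorem coe_decompose_smul_add (hℰ : IsFineGraded R ℰ) {e : E} {b : σ → ℤ} (he : e ∈ ℰ b)
    (p : MvPolynomial σ R) (a : σ →₀ ℕ) :
    (decompose ℰ (p • e) ((fun i => (a i : ℤ)) + b) : E) = monomial a (p.coeff a) • e := by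
  have hdeg : ∀ a' : σ →₀ ℕ, (fun i => (a' i : ℤ)) + b = (fun i => (a i : ℤ)) + b ↔ a' = a := by
    refine fun a' => ⟨fun h => Finsupp.ext fun i => ?_, fun h => h ▸ rfl⟩
    simpa using congrFun h i
  simp only [coe_decompose_smul hℰ he, hdeg, Finset.sum_ite_eq']
  split_ifs with h
  · rfl
  · rw [notMem_support_iff.mp h, monomial_zero, zero_smul]

theorem exists_coe_decompose_smul_eq_monomial_smul (hℰ : IsFineGraded R ℰ) {e : E} {b : σ → ℤ}
    (he : e ∈ ℰ b) (p : MvPolynomial σ R) (d : σ → ℤ) :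
    ∃ (c : σ →₀ ℕ) (r : R), (decompose ℰ (p • e) d : E) = monomial c r • e := by
  by_cases hd : ∃ c : σ →₀ ℕ, (fun i => (c i : ℤ)) + b = d
  · obtain ⟨c, rfl⟩ := hd
    exact ⟨c, p.coeff c, coe_decompose_smul_add hℰ he p c⟩
  · push Not at hd
    refine ⟨0, 0, ?_⟩
    simp [coe_decompose_smul hℰ he, hd]

theorem exists_monomial_smul_eq_monomial_smul (hℰ : IsFineGraded R ℰ) {x y : E} {b b' : σ → ℤ}
    (hx : x ∈ ℰ b) (hy : y ∈ ℰ b') {p q : MvPolynomial σ R} (hp : p ≠ 0) (h : p • x = q • y) :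
    ∃ (a c : σ →₀ ℕ) (μ ν : R), μ ≠ 0 ∧ monomial a μ • x = monomial c ν • y := by
  obtain ⟨a, ha⟩ := p.support_nonempty.mpr hp
  obtain ⟨c, ν, hc⟩ := exists_coe_decompose_smul_eq_monomial_smul hℰ hy q ((fun i => (a i : ℤ)) + b)
  refine ⟨a, c, p.coeff a, ν, mem_support_iff.mp ha, ?_⟩
  rw [← coe_decompose_smul_add hℰ hx, h, hc]

end FineGrading

theorem exists_monomial_smul_eq_monomial_smul_of_injective {σ k E : Type*} [Fintype σ]
    [Field k] [AddCommGroup E] [Module (MvPolynomial σ k) E] {ℰ : (σ → ℤ) → AddSubgroup E}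
    [Decomposition ℰ] (hℰ : IsFineGraded k ℰ)
    {T : E →ₗ[MvPolynomial σ k] FractionRing (MvPolynomial σ k)}
    (hT : Function.Injective T) {x y : E} {b b' : σ → ℤ} (hx : x ∈ ℰ b) (hx0 : x ≠ 0)
    (hy : y ∈ ℰ b') (hy0 : y ≠ 0) :
    ∃ (a c : σ →₀ ℕ) (μ ν : k), μ ≠ 0 ∧ ν ≠ 0 ∧ monomial a μ • x = monomial c ν • y := by
  obtain ⟨p, q, hp, h⟩ := exists_smul_eq_smul_of_injective hT x hy0
  obtain ⟨a, c, μ, ν, hμ, h⟩ := exists_monomial_smul_eq_monomial_smul hℰ hx hy hp h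
  refine ⟨a, c, μ, ν, hμ, fun hν => ?_, h⟩
  rw [hν, monomial_zero, zero_smul] at h
  exact hx0 ((map_eq_zero_iff T hT).mp (by simpa [hμ] using congrArg T h))

theorem algebraMap_monomial_div_mul_eq {σ k K : Type*} [Field k] [Field K]
    [Algebra (MvPolynomial σ k) K] {a b c : σ →₀ ℕ} {μ ν : k} (hμ : μ ≠ 0) {t t₀ : K}
    (ht₀ : t₀ ≠ 0)
    (h : algebraMap _ K (monomial a μ) * t = algebraMap _ K (monomial c ν) * t₀) :
    algebraMap _ K (monomial (a + b) (1 : k)) / t₀ * t =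
      algebraMap _ K (monomial (b + c) (ν / μ)) := by
  have hab : monomial (a + b) (1 : k) = monomial b μ⁻¹ * monomial a μ := by
    rw [monomial_mul, add_comm, inv_mul_cancel₀ hμ]
  have hbc : monomial (b + c) (ν / μ) = monomial b μ⁻¹ * monomial c ν := by
    rw [monomial_mul, div_eq_inv_mul]
  rw [hab, hbc, map_mul, map_mul, div_mul_eq_mul_div, mul_assoc, h, ← mul_assoc,
    mul_div_assoc, div_self ht₀, mul_one]

theorem MvPolynomial.ideal_span_range_monomial {σ k ι : Type*} [Field k] (d : ι → σ →₀ ℕ)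
    {r : ι → k} (hr : ∀ i, r i ≠ 0) :
    Ideal.span (Set.range fun i => monomial (d i) (r i)) =
      Ideal.span ((fun a => monomial a (1 : k)) '' Set.range d) := by
  rw [← Set.range_comp]
  refine le_antisymm (Ideal.span_le.mpr ?_) (Ideal.span_le.mpr ?_) <;>
    rintro _ ⟨i, rfl⟩
  · show monomial (d i) (r i) ∈ _
    rw [← mul_one (r i), ← C_mul_monomial]
    exact Ideal.mul_mem_left _ _ (Ideal.subset_span ⟨i, rfl⟩)
  · rw [Function.comp_apply, ← inv_mul_cancel₀ (hr i), ← C_mul_monomial]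
    exact Ideal.mul_mem_left _ _ (Ideal.subset_span ⟨i, rfl⟩)

theorem nonempty_linearEquiv_ideal_span_of_injective {R A M ι : Type*} [CommSemiring R]
    [Semiring A] [Algebra R A] [AddCommMonoid M] [Module R M]
    (hA : Function.Injective (algebraMap R A)) {φ : M →ₗ[R] A} (hφ : Function.Injective φ)
    {v : ι → M} (hv : Submodule.span R (Set.range v) = ⊤) {f : ι → R}
    (hf : ∀ i, φ (v i) = algebraMap R A (f i)) :
    Nonempty (M ≃ₗ[R] Ideal.span (Set.range f)) := by
  have hrange : LinearMap.range φ =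
      Submodule.map (Algebra.linearMap R A) (Ideal.span (Set.range f)) := by
    rw [LinearMap.range_eq_map, ← hv, Submodule.map_span, Ideal.span, Submodule.map_span,
      ← Set.range_comp, ← Set.range_comp]
    exact congrArg _ (congrArg _ (funext hf))
  exact ⟨(LinearEquiv.ofInjective φ hφ).trans ((LinearEquiv.ofEq _ _ hrange).trans
    (Submodule.equivMapOfInjective (Algebra.linearMap R A) hA _).symm)⟩

theorem exists_monomial_ideal_linearEquiv {σ k E ι : Type*} [Field k] [AddCommGroup E]
    [Module (MvPolynomial σ k) E] [Fintype ι]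
    {T : E →ₗ[MvPolynomial σ k] FractionRing (MvPolynomial σ k)} (hT : Function.Injective T)
    {v : ι → E} (hv : Submodule.span (MvPolynomial σ k) (Set.range v) = ⊤) {e₀ : E} (he₀ : e₀ ≠ 0)
    (hrel : ∀ i, ∃ (a c : σ →₀ ℕ) (μ ν : k), μ ≠ 0 ∧ ν ≠ 0 ∧
      monomial a μ • v i = monomial c ν • e₀) :
    ∃ I : Ideal (MvPolynomial σ k),
      (∃ A : Set (σ →₀ ℕ), I = Ideal.span ((fun a => monomial a (1 : k)) '' A)) ∧
      Nonempty (E ≃ₗ[MvPolynomial σ k] I) := by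
  classical
  choose a c μ ν hμ hν hrel using hrel
  set K := FractionRing (MvPolynomial σ k)
  have hTe₀ : T e₀ ≠ 0 := (map_ne_zero_iff T hT).mpr he₀
  let u : K := algebraMap _ K (monomial (∑ j, a j) (1 : k)) / T e₀
  have hu : u ≠ 0 := div_ne_zero (by simp) hTe₀
  -- with `N = ∑ j, a j`, the factor `xᴺ / T e₀` clears the denominator `xᵃⁱ` of every `T (v i)`
  let φ := LinearMap.mulLeft (MvPolynomial σ k) u ∘ₗ T
  have hφ : Function.Injective φ := (mul_right_injective₀ hu).comp hT
  have hφv : ∀ i, φ (v i) = algebraMap _ K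
      (monomial ((∑ j ∈ Finset.univ.erase i, a j) + c i) (ν i / μ i)) := by
    intro i
    have h := congrArg T (hrel i)
    simp only [map_smul, Algebra.smul_def] at h
    rw [← algebraMap_monomial_div_mul_eq (hμ i) hTe₀ h,
      Finset.add_sum_erase _ _ (Finset.mem_univ i)]
    rfl
  obtain ⟨e⟩ :=
    nonempty_linearEquiv_ideal_span_of_injective (IsFractionRing.injective _ K) hφ hv hφv
  rw [MvPolynomial.ideal_span_range_monomial _ fun i => div_ne_zero (hν i) (hμ i)] at e
  exact ⟨_, ⟨_, rfl⟩, ⟨e⟩⟩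

/-- Let `k` be a field and `E` a finitely generated torsion-free module of rank 1 over
the polynomial ring `P = k[x₁, …, xₙ]` (i.e. `E ⊗_P Frac(P)` is a 1-dimensional
`Frac(P)`-vector space), equipped with a `ℤⁿ`-grading compatible with the fine
`ℕⁿ`-grading of `P` (so that the homogeneous component `k·xᵃ` of `P` maps `E_b` into
`E_{a+b}`). Then `E` is isomorphic as a `P`-module to an ideal of `P` generated by
monomials. -/
theorem fine_graded_rank_one_torsion_free_is_monomial_ideal
    {k : Type*} [Field k] {n : ℕ}
    {E : Type*} [AddCommGroup E] [Module (MvPolynomial (Fin n) k) E]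
    [Module.Finite (MvPolynomial (Fin n) k) E]
    (htf : ∀ (r : MvPolynomial (Fin n) k) (e : E), r • e = 0 → r = 0 ∨ e = 0)
    (hrank : Module.rank (FractionRing (MvPolynomial (Fin n) k))
      (FractionRing (MvPolynomial (Fin n) k) ⊗[MvPolynomial (Fin n) k] E) = 1)
    (ℰ : (Fin n → ℤ) → AddSubgroup E) (hdecomp : DirectSum.IsInternal ℰ)
    (hsmul : ∀ (c : k) (a : Fin n →₀ ℕ) (b : Fin n → ℤ) (e : E), e ∈ ℰ b →
      (MvPolynomial.monomial a c) • e ∈ ℰ ((fun i => (a i : ℤ)) + b)) :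
    ∃ I : Ideal (MvPolynomial (Fin n) k),
      (∃ A : Set (Fin n →₀ ℕ),
        I = Ideal.span ((fun a => MvPolynomial.monomial a (1 : k)) '' A)) ∧
      Nonempty (E ≃ₗ[MvPolynomial (Fin n) k] I) := by
  let _ := hdecomp.chooseDecomposition
  have : Nontrivial E := nontrivial_of_rank_tensor_eq_one hrank
  obtain ⟨T, hT⟩ := exists_injective_linearMap_fractionRing htf hrank
  obtain ⟨H, hH, hHspan⟩ := Decomposition.exists_finset_homogeneous_span_eq_top
    (R := MvPolynomial (Fin n) k) ℰ
  obtain ⟨e₀, he₀H⟩ : H.Nonempty := by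
    rw [Finset.nonempty_iff_ne_empty]
    rintro rfl
    simp at hHspan
  obtain ⟨he₀, b₀, hb₀⟩ := hH e₀ he₀H
  refine exists_monomial_ideal_linearEquiv hT (v := ((↑) : H → E)) (by simpa using hHspan) he₀
    fun x => ?_
  obtain ⟨hx, b, hb⟩ := hH x x.2
  exact exists_monomial_smul_eq_monomial_smul_of_injective hsmul hT hb hx hb₀ he₀
end
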